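/- Let n be a natural number and let U ⊆ ℂ be a nonempty open set which is simply connected as a topological subspace and with 0 ∉ U. Let h : ℂ → ℂ be a map such that z ↦ conj(h(z)) is complex-differentiable on U, h(z) ≠ 0 for every z ∈ U, and z^n = conj(h(z))^n · (g'(z))^2 for all z ∈ U, where g(z) = conj(h(z)) and g' is its complex derivative. Assume there is a continuous path γ : [0,1] → ℂ with γ(t) ∈ U for all t < 1, γ(1) = 0, and h(γ(t)) → 0 as t → 1⁻. Then there exists a natural number j < n+2 such that h(z) = exp(2πij/(n+2)) · conj(z) for every z ∈ U. -/

import Mathlib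

/-!
Put `S = g^(n+1) g'`, so that `S² = g^(n+2) z^n`. Locally the hypothesis says
`d(g^((n+2)/2)) = ± d(z^((n+2)/2))`, i.e. `g^((n+2)/2) = ± z^((n+2)/2) + c`, and the square
`c² = z^(n+2) - 2 z S + g^(n+2)` is a single-valued holomorphic function with zero derivative,
hence constant on the connected set `U`. Along the path both `z` and `g` tend to `0`, so `c = 0`.
Then `S = z^(n+1)`, `g^(n+2) = z^(n+2)` and `z g' = g`, so `g / z` is a constant `(n+2)`-th root
of unity.
-/

open Complex ComplexConjugate Filter Set Topology

theorem Filter.Tendsto.of_sq_tendsto_zero {α 𝕜 : Type*} [NormedDivisionRing 𝕜] {l : Filter α}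
    {f : α → 𝕜} (h : Tendsto (fun x => f x ^ 2) l (𝓝 0)) : Tendsto f l (𝓝 0) := by
  rw [tendsto_zero_iff_norm_tendsto_zero] at h ⊢
  simpa [Function.comp_def, Real.sqrt_sq (norm_nonneg _)] using
    (Real.continuous_sqrt.tendsto 0).comp h

theorem ContinuousOn.tendsto_nhdsLT_one {X : Type*} [TopologicalSpace X] {γ : ℝ → X}
    (hγ : ContinuousOn γ (Icc 0 1)) : Tendsto γ (𝓝[<] 1) (𝓝 (γ 1)) :=
  (hγ 1 (right_mem_Icc.2 zero_le_one)).mono_left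
    (nhdsWithin_mono _ Ioo_subset_Icc_self |>.trans' (nhdsWithin_Ioo_eq_nhdsLT zero_lt_one).ge)

theorem exists_eq_exp_of_pow_eq_one {k : ℕ} [NeZero k] {ω : ℂ} (hω : ω ^ k = 1) :
    ∃ j < k, ω = exp (2 * Real.pi * I * j / k) := by
  obtain ⟨j, hj, rfl⟩ := (isPrimitiveRoot_exp k (NeZero.ne k)).eq_pow_of_pow_eq_one hω
  refine ⟨j, hj, ?_⟩
  rw [← exp_nat_mul]
  ring_nf

noncomputable def crossTerm (n : ℕ) (g : ℂ → ℂ) (z : ℂ) : ℂ := g z ^ (n + 1) * deriv g z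

noncomputable def hopfInvariant (n : ℕ) (g : ℂ → ℂ) (z : ℂ) : ℂ :=
  z ^ (n + 2) - 2 * z * crossTerm n g z + g z ^ (n + 2)

section

variable {n : ℕ} {U : Set ℂ} {g : ℂ → ℂ} {z : ℂ}

theorem crossTerm_sq (heq : z ^ n = g z ^ n * deriv g z ^ 2) :
    crossTerm n g z ^ 2 = g z ^ (n + 2) * z ^ n := by
  rw [crossTerm, heq]
  ring

theorem crossTerm_ne_zero (heq : z ^ n = g z ^ n * deriv g z ^ 2) (hz : z ≠ 0) (hgz : g z ≠ 0) :
    crossTerm n g z ≠ 0 := by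
  have : crossTerm n g z ^ 2 ≠ 0 := by
    rw [crossTerm_sq heq]
    exact mul_ne_zero (pow_ne_zero _ hgz) (pow_ne_zero _ hz)
  exact pow_ne_zero_iff two_ne_zero |>.1 this

theorem differentiableOn_crossTerm (hU : IsOpen U) (hg : DifferentiableOn ℂ g U) :
    DifferentiableOn ℂ (crossTerm n g) U :=
  (hg.pow _).mul (hg.deriv hU)

theorem two_mul_mul_deriv_crossTerm (hU : IsOpen U) (hg : DifferentiableOn ℂ g U)
    (heq : ∀ w ∈ U, w ^ n = g w ^ n * deriv g w ^ 2) (hz : z ∈ U) (hz0 : z ≠ 0)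
    (hgz : g z ≠ 0) :
    2 * z * deriv (crossTerm n g) z = (n + 2) * z ^ (n + 1) + n * crossTerm n g z := by
  have hS : HasDerivAt (crossTerm n g) (deriv (crossTerm n g) z) z :=
    (differentiableOn_crossTerm hU hg |>.differentiableAt (hU.mem_nhds hz)).hasDerivAt
  have hgd : HasDerivAt g (deriv g z) z :=
    (hg.differentiableAt (hU.mem_nhds hz)).hasDerivAt
  -- differentiate `(w S(w))² = (g(w) w)^(n+2)`, then cancel `z S(z) ≠ 0`
  have hsq : (fun w => (w * crossTerm n g w) ^ 2) =ᶠ[𝓝 z] fun w => (g w * w) ^ (n + 2) := by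
    filter_upwards [hU.mem_nhds hz] with w hw
    linear_combination w ^ 2 * crossTerm_sq (heq w hw)
  have hderiv := (((hasDerivAt_id' z).mul hS).pow 2).unique
    ((hgd.mul (hasDerivAt_id' z)).pow (n + 2) |>.congr_of_eventuallyEq hsq)
  have hSz := crossTerm_sq (heq z hz)
  apply mul_left_cancel₀ (mul_ne_zero hz0 (crossTerm_ne_zero (heq z hz) hz0 hgz))
  push_cast at hderiv
  simp only [Pi.mul_apply, crossTerm] at hderiv hSz ⊢
  linear_combination hderiv - (n + 2) * z * hSz

theorem hasDerivAt_hopfInvariant (hU : IsOpen U) (hg : DifferentiableOn ℂ g U)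
    (heq : ∀ w ∈ U, w ^ n = g w ^ n * deriv g w ^ 2) (hz : z ∈ U) (hz0 : z ≠ 0)
    (hgz : g z ≠ 0) : HasDerivAt (hopfInvariant n g) 0 z := by
  have hS : HasDerivAt (crossTerm n g) (deriv (crossTerm n g) z) z :=
    (differentiableOn_crossTerm hU hg |>.differentiableAt (hU.mem_nhds hz)).hasDerivAt
  have hgd : HasDerivAt g (deriv g z) z :=
    (hg.differentiableAt (hU.mem_nhds hz)).hasDerivAt
  have hK := ((hasDerivAt_pow (n + 2) z).sub (((hasDerivAt_id' z).const_mul 2).mul hS)).add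
    (hgd.pow (n + 2))
  have hK' : hopfInvariant n g =
      (fun x => x ^ (n + 2)) - (fun y => 2 * y) * crossTerm n g + g ^ (n + 2) := by
    ext w
    simp [hopfInvariant, mul_assoc]
  rw [hK']
  refine hK.congr_deriv ?_
  have := two_mul_mul_deriv_crossTerm hU hg heq hz hz0 hgz
  simp only [crossTerm] at this ⊢
  push_cast
  linear_combination -this

theorem pow_mul_hopfInvariant (heq : z ^ n = g z ^ n * deriv g z ^ 2) :
    z ^ n * hopfInvariant n g z = (z ^ (n + 1) - crossTerm n g z) ^ 2 := by
  rw [hopfInvariant]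
  linear_combination -crossTerm_sq heq

theorem tendsto_hopfInvariant_comp {α : Type*} {l : Filter α} {w : α → ℂ}
    (heq : ∀ z ∈ U, z ^ n = g z ^ n * deriv g z ^ 2) (hwU : ∀ᶠ t in l, w t ∈ U)
    (hw : Tendsto w l (𝓝 0)) (hgw : Tendsto (fun t => g (w t)) l (𝓝 0)) :
    Tendsto (fun t => hopfInvariant n g (w t)) l (𝓝 0) := by
  -- `(z S(z))² = (g(z) z)^(n+2)` tends to `0`
  have hcross : Tendsto (fun t => w t * crossTerm n g (w t)) l (𝓝 0) := by
    refine Tendsto.of_sq_tendsto_zero ?_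
    have hlim : Tendsto (fun t => (g (w t) * w t) ^ (n + 2)) l (𝓝 0) := by
      simpa using (hgw.mul hw).pow (n + 2)
    refine hlim.congr' ?_
    filter_upwards [hwU] with t ht
    linear_combination -(w t ^ 2 * crossTerm_sq (heq _ ht))
  simpa [hopfInvariant, mul_assoc] using ((hw.pow (n + 2)).sub (hcross.const_mul 2)).add
    (hgw.pow (n + 2))

theorem exists_pow_eq_one_eqOn_mul_of_hopfInvariant_eq_zero {z₀ : ℂ} (hU : IsOpen U)
    (hUc : IsPreconnected U) (hz₀ : z₀ ∈ U) (hU0 : (0 : ℂ) ∉ U) (hg : DifferentiableOn ℂ g U)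
    (heq : ∀ z ∈ U, z ^ n = g z ^ n * deriv g z ^ 2)
    (hK : ∀ z ∈ U, hopfInvariant n g z = 0) :
    ∃ ω : ℂ, ω ^ (n + 2) = 1 ∧ ∀ z ∈ U, g z = ω * z := by
  have hz0 : ∀ z ∈ U, z ≠ 0 := fun z hz => ne_of_mem_of_not_mem hz hU0
  have hcross : ∀ z ∈ U, crossTerm n g z = z ^ (n + 1) := fun z hz => by
    have := pow_mul_hopfInvariant (heq z hz)
    rw [hK z hz, mul_zero, eq_comm, sq_eq_zero_iff, sub_eq_zero] at this
    exact this.symm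
  have hpow : ∀ z ∈ U, g z ^ (n + 2) = z ^ (n + 2) := fun z hz => by
    have := crossTerm_sq (heq z hz)
    rw [hcross z hz] at this
    exact mul_right_cancel₀ (pow_ne_zero n (hz0 z hz)) (by linear_combination -this)
  have hlin : ∀ z ∈ U, deriv g z * z = g z := fun z hz => by
    have hSz := hcross z hz
    rw [crossTerm] at hSz
    refine mul_right_cancel₀ (pow_ne_zero (n + 1) (hz0 z hz)) ?_
    linear_combination g z * hSz - deriv g z * hpow z hz
  have hquot : DifferentiableOn ℂ (fun z => g z / z) U := hg.div differentiableOn_id hz0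
  obtain ⟨ω, hω⟩ := hU.exists_is_const_of_deriv_eq_zero hUc hquot fun z hz => by
    have hq : HasDerivAt (fun z => g z / z) ((deriv g z * z - g z * 1) / z ^ 2) z :=
      (hg.differentiableAt (hU.mem_nhds hz)).hasDerivAt.div (hasDerivAt_id' z) (hz0 z hz)
    rw [hq.deriv, mul_one, hlin z hz, sub_self, zero_div, Pi.zero_apply]
  have hgω : ∀ z ∈ U, g z = ω * z := fun z hz => by
    rw [← hω z hz, div_mul_cancel₀ _ (hz0 z hz)]
  refine ⟨ω, ?_, hgω⟩
  have := hpow z₀ hz₀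
  rw [hgω z₀ hz₀, mul_pow] at this
  exact mul_right_cancel₀ (pow_ne_zero _ (hz0 z₀ hz₀)) (this.trans (one_mul _).symm)

theorem hopfInvariant_eq_zero_of_tendsto {α : Type*} {l : Filter α} [l.NeBot] {w : α → ℂ}
    (hU : IsOpen U) (hUc : IsPreconnected U) (hU0 : (0 : ℂ) ∉ U) (hg : DifferentiableOn ℂ g U)
    (hg0 : ∀ z ∈ U, g z ≠ 0) (heq : ∀ z ∈ U, z ^ n = g z ^ n * deriv g z ^ 2)
    (hwU : ∀ᶠ t in l, w t ∈ U) (hw : Tendsto w l (𝓝 0))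
    (hgw : Tendsto (fun t => g (w t)) l (𝓝 0)) :
    ∀ z ∈ U, hopfInvariant n g z = 0 := by
  have hK := fun z hz =>
    hasDerivAt_hopfInvariant hU hg heq hz (ne_of_mem_of_not_mem hz hU0) (hg0 z hz)
  obtain ⟨c, hc⟩ := hU.exists_is_const_of_deriv_eq_zero hUc
    (fun z hz => (hK z hz).differentiableAt.differentiableWithinAt) fun z hz => (hK z hz).deriv
  have hlim : Tendsto (fun t => hopfInvariant n g (w t)) l (𝓝 c) :=
    tendsto_const_nhds.congr' (hwU.mono fun t ht => (hc _ ht).symm)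
  have hc0 : c = 0 := tendsto_nhds_unique hlim (tendsto_hopfInvariant_comp heq hwU hw hgw)
  exact fun z hz => (hc z hz).trans hc0

end

theorem antiholomorphic_rotation_lemma_general
    (n : ℕ) (U : Set ℂ) (hUopen : IsOpen U)
    (hUsc : SimplyConnectedSpace U) (hU0 : (0 : ℂ) ∉ U)
    (h : ℂ → ℂ) (g : ℂ → ℂ) (hg : ∀ z, g z = (starRingEnd ℂ) (h z))
    (hdiff : DifferentiableOn ℂ g U)
    (hne : ∀ z ∈ U, h z ≠ 0)
    (heq : ∀ z ∈ U, z ^ n = g z ^ n * (deriv g z) ^ 2)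
    (γ : ℝ → ℂ) (hγcont : ContinuousOn γ (Set.Icc 0 1))
    (hγU : ∀ t ∈ Set.Ico (0 : ℝ) 1, γ t ∈ U)
    (hγ1 : γ 1 = 0)
    (hγlim : Tendsto (fun t => h (γ t)) (nhdsWithin 1 (Set.Iio 1)) (nhds 0)) :
    ∃ j : ℕ, j < n + 2 ∧
      ∀ z ∈ U, h z = Complex.exp (2 * Real.pi * Complex.I * j / (n + 2)) *
        (starRingEnd ℂ) z := by
  have hUc : IsPreconnected U := isPreconnected_iff_preconnectedSpace.2 inferInstance
  have hg0 : ∀ z ∈ U, g z ≠ 0 := by simpa [hg] using hne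
  have hγU' : ∀ᶠ t in 𝓝[<] 1, γ t ∈ U := by
    filter_upwards [Ioo_mem_nhdsLT zero_lt_one] with t ht
    exact hγU t ⟨ht.1.le, ht.2⟩
  have hgγ : Tendsto (fun t => g (γ t)) (𝓝[<] 1) (𝓝 0) := by
    simpa [hg, Function.comp_def] using (continuous_conj.tendsto 0).comp hγlim
  have hK := hopfInvariant_eq_zero_of_tendsto hUopen hUc hU0 hdiff hg0 heq hγU'
    (hγ1 ▸ hγcont.tendsto_nhdsLT_one) hgγ
  obtain ⟨ω, hω, hgω⟩ := exists_pow_eq_one_eqOn_mul_of_hopfInvariant_eq_zero hUopen hUc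
    (hγU 0 ⟨le_rfl, zero_lt_one⟩) hU0 hdiff heq hK
  obtain ⟨j, hj, hωj⟩ := exists_eq_exp_of_pow_eq_one (k := n + 2) (ω := conj ω) <| by
    rw [← map_pow, hω, map_one]
  refine ⟨j, hj, fun z hz => ?_⟩
  rw [← conj_conj (h z), ← hg, hgω z hz, map_mul, hωj]
  push_cast
  ring

/-- Anti-holomorphic rotation lemma: in a natural coordinate where the Hopf
differential is `z^n dz^2`, an anti-holomorphic map leaving the differential
invariant and fixing the zero is a reflection `z ↦ e^{2πij/(n+2)} conj z`. -/
theorem antiholomorphic_rotation_lemma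
    (n : ℕ) (U : Set ℂ) (hUne : U.Nonempty) (hUopen : IsOpen U)
    (hUsc : SimplyConnectedSpace U) (hU0 : (0 : ℂ) ∉ U)
    (h : ℂ → ℂ) (g : ℂ → ℂ) (hg : ∀ z, g z = (starRingEnd ℂ) (h z))
    (hdiff : DifferentiableOn ℂ g U)
    (hne : ∀ z ∈ U, h z ≠ 0)
    (heq : ∀ z ∈ U, z ^ n = g z ^ n * (deriv g z) ^ 2)
    (γ : ℝ → ℂ) (hγcont : ContinuousOn γ (Set.Icc 0 1))
    (hγU : ∀ t ∈ Set.Ico (0 : ℝ) 1, γ t ∈ U)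
    (hγ1 : γ 1 = 0)
    (hγlim : Tendsto (fun t => h (γ t)) (nhdsWithin 1 (Set.Iio 1)) (nhds 0)) :
    ∃ j : ℕ, j < n + 2 ∧
      ∀ z ∈ U, h z = Complex.exp (2 * Real.pi * Complex.I * j / (n + 2)) *
        (starRingEnd ℂ) z :=
  antiholomorphic_rotation_lemma_general n U hUopen hUsc hU0 h g hg hdiff hne heq γ hγcont hγU hγ1
    hγlim
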